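/- arXiv:2503.11438 — 4 statements merged into one kernel-verified Lean document; each statement's English description precedes it below -/
import Mathlib

section
/- Let E be a finite-dimensional real inner product space, let 0 < m ≤ M, and let G : E → ℝ be three times continuously differentiable such that D²G(F)[Z,Z] ≥ m‖Z‖² for all F, Z ∈ E and ‖D³G(F)‖ ≤ M for all F ∈ E (operator norm of the third derivative as a trilinear map). Then for every A ∈ E, the function F ↦ DG(F)(A) + (M/m)·‖A‖·G(F) is convex on E. -/
/-! With `c = (M/m)‖A‖`, the Hessian of `F ↦ DG(F)(A) + c G(F)` at `F` in direction `v` is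
`D³G(F)[v,v,A] + c D²G(F)[v,v] ≥ -M‖v‖²‖A‖ + c m‖v‖² = 0`. A `C²` function with positive
semidefinite Hessian is convex, since its restriction to every line has a nonnegative second
derivative. -/

open Set

theorem convexOn_univ_of_forall_convexOn_line {E : Type*} [AddCommGroup E] [Module ℝ E]
    {f : E → ℝ} (h : ∀ x v : E, ConvexOn ℝ univ fun t : ℝ => f (x + t • v)) :
    ConvexOn ℝ univ f := by
  refine ⟨convex_univ, fun x _ y _ a b ha hb hab => ?_⟩
  have key := (h x (y - x)).2 (mem_univ 0) (mem_univ 1) ha hb hab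
  have hx : x + b • (y - x) = a • x + b • y := by
    rw [eq_sub_of_add_eq hab]; module
  simpa [hx] using key

section Derivatives

variable {𝕜 E F : Type*} [NontriviallyNormedField 𝕜] [NormedAddCommGroup E] [NormedSpace 𝕜 E]
  [NormedAddCommGroup F] [NormedSpace 𝕜 F] {f : E → F}

theorem hasDerivAt_comp_line (hf : Differentiable 𝕜 f) (x v : E) (t : 𝕜) :
    HasDerivAt (fun s : 𝕜 => f (x + s • v)) (fderiv 𝕜 f (x + t • v) v) t :=
  (hf _).hasFDerivAt.comp_hasDerivAt t <| by
    simpa using ((hasDerivAt_id t).smul_const v).const_add x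

theorem hasDerivAt_fderiv_comp_line (hf : ContDiff 𝕜 2 f) (x v : E) (t : 𝕜) :
    HasDerivAt (fun s : 𝕜 => fderiv 𝕜 f (x + s • v) v)
      (iteratedFDeriv 𝕜 2 f (x + t • v) ![v, v]) t := by
  have hDf : Differentiable 𝕜 (fderiv 𝕜 f) := (hf.fderiv_right le_rfl).differentiable one_ne_zero
  rw [iteratedFDeriv_two_apply]
  convert hasDerivAt_comp_line (hDf.clm_apply (differentiable_const v)) x v t using 1
  simp [fderiv_clm_apply, hDf _]

theorem iteratedFDeriv_fderiv_apply {n : ℕ} (hf : ContDiff 𝕜 (n + 1) f) (a x : E)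
    (m : Fin n → E) :
    iteratedFDeriv 𝕜 n (fun y => fderiv 𝕜 f y a) x m =
      iteratedFDeriv 𝕜 (n + 1) f x (Fin.snoc m a) := by
  rw [iteratedFDeriv_succ_apply_right, Fin.init_snoc, Fin.snoc_last]
  have hf' : ContDiff 𝕜 n (fderiv 𝕜 f) := hf.fderiv_right le_rfl
  exact congrArg (· m)
    ((ContinuousLinearMap.apply 𝕜 F a).iteratedFDeriv_comp_left hf'.contDiffAt le_rfl)

end Derivatives

theorem convexOn_univ_of_iteratedFDeriv_two_nonneg {E : Type*} [NormedAddCommGroup E]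
    [NormedSpace ℝ E] {f : E → ℝ} (hf : ContDiff ℝ 2 f)
    (hf₂ : ∀ x v : E, 0 ≤ iteratedFDeriv ℝ 2 f x ![v, v]) : ConvexOn ℝ univ f := by
  refine convexOn_univ_of_forall_convexOn_line fun x v => ?_
  have hf₁ : Differentiable ℝ f := hf.differentiable two_ne_zero
  have hderiv : deriv (fun t : ℝ => f (x + t • v)) = fun t => fderiv ℝ f (x + t • v) v :=
    funext fun t => (hasDerivAt_comp_line hf₁ x v t).deriv
  refine convexOn_univ_of_deriv2_nonneg
    (fun t => (hasDerivAt_comp_line hf₁ x v t).differentiableAt)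
    (hderiv ▸ fun t => (hasDerivAt_fderiv_comp_line hf x v t).differentiableAt) fun t => ?_
  rw [Function.iterate_succ_apply, Function.iterate_one, hderiv,
    (hasDerivAt_fderiv_comp_line hf x v t).deriv]
  exact hf₂ _ v

theorem iteratedFDeriv_two_fderiv_apply_add_const_mul {E : Type*} [NormedAddCommGroup E]
    [NormedSpace ℝ E] {f : E → ℝ} (hf : ContDiff ℝ 3 f) (a : E) (c : ℝ) (x v : E) :
    iteratedFDeriv ℝ 2 (fun y => fderiv ℝ f y a + c * f y) x ![v, v] =
      iteratedFDeriv ℝ 3 f x ![v, v, a] + c * iteratedFDeriv ℝ 2 f x ![v, v] := by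
  have hfa : ContDiff ℝ 2 fun y => fderiv ℝ f y a :=
    (hf.fderiv_right le_rfl).clm_apply contDiff_const
  have hf₂ : ContDiff ℝ 2 f := hf.of_le (by norm_num)
  rw [fun_iteratedFDeriv_add_apply hfa.contDiffAt (contDiff_const.mul hf₂).contDiffAt,
    add_apply, iteratedFDeriv_fderiv_apply hf]
  congr 1
  · congr 1; ext i; fin_cases i <;> rfl
  · exact congrArg (· ![v, v]) (iteratedFDeriv_const_smul_apply' (a := c) hf₂.contDiffAt)

theorem convexity_from_derivative_bounds_general
    (E : Type*) [NormedAddCommGroup E] [InnerProductSpace ℝ E]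
    (m M : ℝ) (hm : 0 < m)
    (G : E → ℝ) (hG : ContDiff ℝ 3 G)
    (h2 : ∀ F Z : E, m * ‖Z‖ ^ 2 ≤ iteratedFDeriv ℝ 2 G F ![Z, Z])
    (h3 : ∀ F : E, ‖iteratedFDeriv ℝ 3 G F‖ ≤ M)
    (A : E) :
    ConvexOn ℝ Set.univ (fun F : E => fderiv ℝ G F A + (M / m) * ‖A‖ * G F) := by
  set c := M / m * ‖A‖
  have hc : 0 ≤ c :=
    mul_nonneg (div_nonneg ((norm_nonneg _).trans (h3 0)) hm.le) (norm_nonneg A)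
  have hsmooth : ContDiff ℝ 2 fun F => fderiv ℝ G F A + c * G F :=
    ((hG.fderiv_right le_rfl).clm_apply contDiff_const).add
      (contDiff_const.mul (hG.of_le (by norm_num)))
  refine convexOn_univ_of_iteratedFDeriv_two_nonneg hsmooth fun x v => ?_
  have hD3 : |iteratedFDeriv ℝ 3 G x ![v, v, A]| ≤ M * ‖v‖ ^ 2 * ‖A‖ := by
    refine ((iteratedFDeriv ℝ 3 G x).le_opNorm _).trans ?_
    calc ‖iteratedFDeriv ℝ 3 G x‖ * ∏ i, ‖![v, v, A] i‖
        = ‖iteratedFDeriv ℝ 3 G x‖ * (‖v‖ ^ 2 * ‖A‖) := by simp [Fin.prod_univ_three, sq]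
      _ ≤ M * (‖v‖ ^ 2 * ‖A‖) := by gcongr; exact h3 x
      _ = M * ‖v‖ ^ 2 * ‖A‖ := by ring
  have hD2 : M * ‖v‖ ^ 2 * ‖A‖ ≤ c * iteratedFDeriv ℝ 2 G x ![v, v] :=
    calc M * ‖v‖ ^ 2 * ‖A‖ = c * (m * ‖v‖ ^ 2) := by simp only [c]; field_simp
      _ ≤ c * iteratedFDeriv ℝ 2 G x ![v, v] := mul_le_mul_of_nonneg_left (h2 x v) hc
  rw [iteratedFDeriv_two_fderiv_apply_add_const_mul hG]
  linarith [(abs_le.mp hD3).1]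

/-- **Convexity property (4.2) from Hypothesis 4.1.**
Let `E` be a finite-dimensional real inner product space, `0 < m ≤ M`, and let
`G : E → ℝ` be `C³` with `D²G(F)[Z,Z] ≥ m‖Z‖²` for all `F, Z` and
`‖D³G(F)‖ ≤ M` for all `F`. Then for every `A ∈ E` the function
`F ↦ DG(F)(A) + (M/m)·‖A‖·G(F)` is convex. -/
theorem convexity_from_derivative_bounds
    (E : Type*) [NormedAddCommGroup E] [InnerProductSpace ℝ E]
    [FiniteDimensional ℝ E]
    (m M : ℝ) (hm : 0 < m) (hmM : m ≤ M)
    (G : E → ℝ) (hG : ContDiff ℝ 3 G)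
    (h2 : ∀ F Z : E, m * ‖Z‖ ^ 2 ≤ iteratedFDeriv ℝ 2 G F ![Z, Z])
    (h3 : ∀ F : E, ‖iteratedFDeriv ℝ 3 G F‖ ≤ M)
    (A : E) :
    ConvexOn ℝ Set.univ (fun F : E => fderiv ℝ G F A + (M / m) * ‖A‖ * G F) :=
  convexity_from_derivative_bounds_general E m M hm G hG h2 h3 A
end

section
/- Let d ∈ ℝ³ with ‖d‖ = 1, let G be a real 3×3 matrix with Gᵀ d = 0, let c(G) := (G₃₂ − G₂₃, G₁₃ − G₃₁, G₂₁ − G₁₂) be the axial vector of G, and let K₁, K₃ ∈ ℝ. Then (K₁/2)·(trace G)² + (K₁/2)·(d · c(G))² + (K₃/2)·‖d × c(G)‖² + (K₁/2)·(trace(G·G) − (trace G)²) = (K₁/2)·‖G‖_F² + ((K₃ − K₁)/2)·‖G d‖². -/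
open Matrix
open scoped BigOperators

/-- The axial vector `c(G) = (G₃₂ − G₂₃, G₁₃ − G₃₁, G₂₁ − G₁₂)` of a real
`3 × 3` matrix `G` (zero-based indices). -/
def axial (G : Matrix (Fin 3) (Fin 3) ℝ) : Fin 3 → ℝ :=
  ![G 2 1 - G 1 2, G 0 2 - G 2 0, G 1 0 - G 0 1]

/-- **Pointwise reformulation of the Oseen–Frank energy.**
For a unit vector `d ∈ ℝ³` and a real `3 × 3` matrix `G` with `Gᵀ d = 0`
(the case `G = ∇d` of a unit director field), and constants `K₁, K₃`:
`(K₁/2)(tr G)² + (K₁/2)(d·c(G))² + (K₃/2)|d × c(G)|²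
  + (K₁/2)(tr(G·G) − (tr G)²) = (K₁/2)|G|_F² + ((K₃−K₁)/2)|G d|²`. -/
theorem oseen_frank_reformulation (d : Fin 3 → ℝ) (hd : ∑ i, d i ^ 2 = 1)
    (G : Matrix (Fin 3) (Fin 3) ℝ) (hG : Gᵀ.mulVec d = 0) (K₁ K₃ : ℝ) :
    K₁ / 2 * G.trace ^ 2 + K₁ / 2 * (∑ i, d i * axial G i) ^ 2
      + K₃ / 2 * (∑ i, (crossProduct d (axial G)) i ^ 2)
      + K₁ / 2 * ((G * G).trace - G.trace ^ 2)
    = K₁ / 2 * (∑ i, ∑ j, G i j ^ 2)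
      + (K₃ - K₁) / 2 * ∑ i, (G.mulVec d) i ^ 2 := by
  have h0 := congrFun hG 0
  have h1 := congrFun hG 1
  have h2 := congrFun hG 2
  simp [Matrix.mulVec, dotProduct, Fin.sum_univ_three, Matrix.transpose_apply] at h0 h1 h2
  simp [Matrix.trace, Matrix.diag, Matrix.mul_apply, Matrix.mulVec, dotProduct,
    Fin.sum_univ_three, axial, crossProduct] at *
  linear_combination (K₁/2) * ((G 2 1 - G 1 2)^2 + (G 0 2 - G 2 0)^2 + (G 1 0 - G 0 1)^2) * hd
    - (K₃ - K₁)/2 * (2*((G 0 2 - G 2 0)*d 2 - (G 1 0 - G 0 1)*d 1) + (G 0 0 * d 0 + G 1 0 * d 1 + G 2 0 * d 2)) * h0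
    - (K₃ - K₁)/2 * (2*((G 1 0 - G 0 1)*d 0 - (G 2 1 - G 1 2)*d 2) + (G 0 1 * d 0 + G 1 1 * d 1 + G 2 1 * d 2)) * h1
    - (K₃ - K₁)/2 * (2*((G 2 1 - G 1 2)*d 1 - (G 0 2 - G 2 0)*d 0) + (G 0 2 * d 0 + G 1 2 * d 1 + G 2 2 * d 2)) * h2
end

section
/- Let y : ℝ³ × ℝ → ℝ³, (x,t) ↦ y(x,t), be twice continuously differentiable, let ∇y denote the spatial Jacobian matrix and cof M := (adjugate M)ᵀ the cofactor matrix. Then at every point, ∂/∂t [det(∇y)] = Σ_{α=1}^{3} ∂/∂x_α [ Σ_{i=1}^{3} (cof ∇y)_{i α} · ∂yᵢ/∂t ], i.e. ∂ₜ det ∇y = div( (cof ∇y)ᵀ ∂ₜ y ). -/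
/-!
Jacobi's formula gives `∂ₜ det ∇y = Σ_{iα} (cof ∇y)_{iα} ∂ₜ∂_α yᵢ`, while the product rule gives
`div ((cof ∇y)ᵀ ∂ₜy) = Σᵢ (Σ_α ∂_α (cof ∇y)_{iα}) ∂ₜyᵢ + Σ_{iα} (cof ∇y)_{iα} ∂_α∂ₜ yᵢ`.
Mixed partials commute, so it remains to prove the Piola identity `Σ_α ∂_α (cof ∇y)_{iα} = 0`.
Differentiating a cofactor replaces one more row of the matrix, so this sum pairs the symmetric
Hessian `∂_α∂_β y_k` with a determinant that is alternating in `(α, β)`, and vanishes.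
-/

open Matrix

namespace Matrix

variable {n R : Type*} [Fintype n] [DecidableEq n] [CommRing R]

theorem det_updateRow_eq_sum_adjugate_mul (A : Matrix n n R) (i : n) (r : n → R) :
    (A.updateRow i r).det = ∑ j, A.adjugate j i * r j := by
  rw [← cramer_transpose_apply, cramer_eq_adjugate_mulVec, ← adjugate_transpose]
  simp [mulVec, dotProduct]

theorem det_updateRow_updateRow_swap (A : Matrix n n R) {i k : n} (hik : i ≠ k) (u w : n → R) :
    ((A.updateRow i u).updateRow k w).det = -((A.updateRow i w).updateRow k u).det := by
  have hswap : (A.updateRow i w).updateRow k u =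
      ((A.updateRow i u).updateRow k w).submatrix (Equiv.swap i k) id := by
    ext r c
    rcases eq_or_ne r k with rfl | hrk
    · simp [hik]
    rcases eq_or_ne r i with rfl | hri
    · simp [updateRow_apply, hrk]
    · simp [Equiv.swap_apply_of_ne_of_ne hri hrk, hri, hrk]
  rw [hswap, det_permute, Equiv.Perm.sign_swap hik]
  simp

theorem sum_adjugate_updateRow_single_mul_eq_zero (A : Matrix n n R) {i k : n} (hik : i ≠ k)
    (H : Matrix n n R) (hH : H.IsSymm) :
    ∑ α, ∑ β, (A.updateRow i (Pi.single α 1)).adjugate β k * H α β = 0 := by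
  rw [← Finset.sum_product']
  refine Finset.sum_involution (fun p _ => p.swap) ?_ ?_ (by simp) (by simp)
  · rintro ⟨α, β⟩ -
    simp only [Prod.swap_prod_mk, adjugate_apply]
    rw [det_updateRow_updateRow_swap A hik, hH.apply β α]
    ring
  · rintro ⟨α, β⟩ - hne
    contrapose! hne
    obtain rfl : α = β := by simpa using (Prod.ext_iff.1 hne).2
    rw [adjugate_apply, det_zero_of_row_eq hik (by simp [hik]), zero_mul]

end Matrix

section
variable {𝕜 E : Type*} [NontriviallyNormedField 𝕜] [NormedAddCommGroup E] [NormedSpace 𝕜 E]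
  {n : Type*} [Fintype n] [DecidableEq n]

theorem hasFDerivAt_det {A : E → Matrix n n 𝕜} {x : E}
    (hA : ∀ i j, DifferentiableAt 𝕜 (fun z => A z i j) x) :
    HasFDerivAt (fun z => (A z).det)
      (∑ i, ∑ j, (A x).adjugate j i • fderiv 𝕜 (fun z => A z i j) x) x := by
  let detCML : ContinuousMultilinearMap 𝕜 (fun _ : n => n → 𝕜) 𝕜 :=
    ⟨detRowAlternating.toMultilinearMap, continuous_id.matrix_det⟩
  have hrow : ∀ i, HasFDerivAt (fun z => A z i)
      (ContinuousLinearMap.pi fun j => fderiv 𝕜 (fun z => A z i j) x) x := fun i =>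
    hasFDerivAt_pi.2 fun j => (hA i j).hasFDerivAt
  refine (HasFDerivAt.multilinear_comp (f := detCML) hrow).congr_fderiv ?_
  ext u
  simp only [FunLike.coe_sum, Finset.sum_apply, ContinuousLinearMap.coe_comp,
    Function.comp_apply, ContinuousMultilinearMap.toContinuousLinearMap_apply,
    FunLike.coe_smul, Pi.smul_apply, smul_eq_mul,
    ← det_updateRow_eq_sum_adjugate_mul]
  rfl

theorem hasDerivAt_det {A : 𝕜 → Matrix n n 𝕜} {A' : Matrix n n 𝕜} {t : 𝕜}
    (hA : ∀ i j, HasDerivAt (fun s => A s i j) (A' i j) t) :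
    HasDerivAt (fun s => (A s).det) (∑ i, ∑ j, (A t).adjugate j i * A' i j) t := by
  have h := hasFDerivAt_iff_hasDerivAt.1 (hasFDerivAt_det fun i j => (hA i j).differentiableAt)
  simpa [(hA _ _).deriv] using h

theorem hasFDerivAt_adjugate_apply {A : E → Matrix n n 𝕜} {x : E}
    (hA : ∀ i j, DifferentiableAt 𝕜 (fun z => A z i j) x) (α i : n) :
    HasFDerivAt (fun z => (A z).adjugate α i)
      (∑ k ∈ Finset.univ.erase i, ∑ j, ((A x).updateRow i (Pi.single α 1)).adjugate j k •
        fderiv 𝕜 (fun z => A z k j) x) x := by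
  have hrow : ∀ k j, HasFDerivAt (fun z => (A z).updateRow i (Pi.single α 1) k j)
      (if k = i then 0 else fderiv 𝕜 (fun z => A z k j) x) x := by
    intro k j
    split_ifs with hki
    · simpa [hki] using hasFDerivAt_const _ x
    · simpa [hki] using (hA k j).hasFDerivAt
  simp_rw [adjugate_apply (A _) α i]
  refine (hasFDerivAt_det (A := fun z => (A z).updateRow i (Pi.single α 1))
    fun k j => (hrow k j).differentiableAt).congr_fderiv ?_
  refine ((Finset.sum_erase _ ?_).symm.trans
    (Finset.sum_congr rfl fun k hk => Finset.sum_congr rfl fun j _ => ?_))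
  · exact Finset.sum_eq_zero fun j _ => by
      rw [(hrow i j).fderiv, if_pos rfl]; ext; simp
  · rw [(hrow k j).fderiv, if_neg (Finset.ne_of_mem_erase hk)]

/-- The Piola identity: `hcurl` says that the rows of `A` are gradients. -/
theorem sum_fderiv_adjugate_eq_zero {A : (n → 𝕜) → Matrix n n 𝕜} {x : n → 𝕜}
    (hA : ∀ i j, DifferentiableAt 𝕜 (fun z => A z i j) x)
    (hcurl : ∀ i j k, fderiv 𝕜 (fun z => A z i j) x (Pi.single k 1) =
      fderiv 𝕜 (fun z => A z i k) x (Pi.single j 1))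
    (i : n) :
    ∑ α, fderiv 𝕜 (fun z => (A z).adjugate α i) x (Pi.single α 1) = 0 := by
  simp only [(hasFDerivAt_adjugate_apply hA _ i).fderiv, FunLike.coe_sum, Finset.sum_apply,
    FunLike.coe_smul, Pi.smul_apply, smul_eq_mul]
  rw [Finset.sum_comm]
  refine Finset.sum_eq_zero fun k hk => ?_
  exact sum_adjugate_updateRow_single_mul_eq_zero (A x) (Finset.ne_of_mem_erase hk).symm
    (of fun α j => fderiv 𝕜 (fun z => A z k j) x (Pi.single α 1)) (by ext; simp [hcurl])

theorem sum_fderiv_adjugate_mul_eq {A : (n → 𝕜) → Matrix n n 𝕜} {w : (n → 𝕜) → n → 𝕜}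
    {x : n → 𝕜} (hA : ∀ i j, DifferentiableAt 𝕜 (fun z => A z i j) x)
    (hcurl : ∀ i j k, fderiv 𝕜 (fun z => A z i j) x (Pi.single k 1) =
      fderiv 𝕜 (fun z => A z i k) x (Pi.single j 1))
    (hw : ∀ i, DifferentiableAt 𝕜 (fun z => w z i) x) :
    ∑ α, fderiv 𝕜 (fun z => ∑ i, (A z).adjugate α i * w z i) x (Pi.single α 1) =
      ∑ α, ∑ i, (A x).adjugate α i * fderiv 𝕜 (fun z => w z i) x (Pi.single α 1) := by
  have hprod : ∀ α, HasFDerivAt (fun z => ∑ i, (A z).adjugate α i * w z i)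
      (∑ i, ((A x).adjugate α i • fderiv 𝕜 (fun z => w z i) x +
        w x i • fderiv 𝕜 (fun z => (A z).adjugate α i) x)) x := fun α =>
    HasFDerivAt.fun_sum fun i _ =>
      (hasFDerivAt_adjugate_apply hA α i).differentiableAt.hasFDerivAt.mul (hw i).hasFDerivAt
  have hpiola := fun i => sum_fderiv_adjugate_eq_zero hA hcurl i
  simp only [(hprod _).fderiv, FunLike.coe_sum, Finset.sum_apply, _root_.add_apply,
    FunLike.coe_smul, Pi.smul_apply, smul_eq_mul, Finset.sum_add_distrib]
  rw [Finset.sum_comm (f := fun α i => w x i * _)]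
  simp [← Finset.mul_sum, hpiola]

end

section
variable {𝕜 E F G : Type*} [NontriviallyNormedField 𝕜] [NormedAddCommGroup E] [NormedSpace 𝕜 E]
  [NormedAddCommGroup F] [NormedSpace 𝕜 F] [NormedAddCommGroup G] [NormedSpace 𝕜 G]

theorem HasFDerivAt.comp_prodMk_left {f : E × F → G} {f' : E × F →L[𝕜] G} {z : E} {s : F}
    (hf : HasFDerivAt f f' (z, s)) :
    HasFDerivAt (fun w => f (w, s)) (f' ∘L .inl 𝕜 E F) z :=
  hf.comp z (hasFDerivAt_prodMk_left z s)

theorem HasFDerivAt.hasDerivAt_comp_prodMk_right {f : E × 𝕜 → G} {f' : E × 𝕜 →L[𝕜] G} {z : E}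
    {s : 𝕜} (hf : HasFDerivAt f f' (z, s)) :
    HasDerivAt (fun r => f (z, r)) (f' (0, 1)) s :=
  hf.comp_hasDerivAt s ((hasDerivAt_const s z).prodMk (hasDerivAt_id s))

theorem hasFDerivAt_fderiv_apply_left {ι : Type*} [Fintype ι] {f : E × F → ι → 𝕜} {z : E}
    {s : F} (hf : DifferentiableAt 𝕜 (fderiv 𝕜 f) (z, s)) (w : E × F) (i : ι) :
    HasFDerivAt (fun z' => fderiv 𝕜 f (z', s) w i)
      (((ContinuousLinearMap.proj i : (ι → 𝕜) →L[𝕜] 𝕜) ∘L ContinuousLinearMap.apply 𝕜 _ w) ∘L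
        fderiv 𝕜 (fderiv 𝕜 f) (z, s) ∘L .inl 𝕜 E F) z :=
  (((ContinuousLinearMap.proj i : (ι → 𝕜) →L[𝕜] 𝕜) ∘L
    ContinuousLinearMap.apply 𝕜 _ w).hasFDerivAt.comp _ hf.hasFDerivAt).comp_prodMk_left

theorem hasDerivAt_fderiv_apply_right {ι : Type*} [Fintype ι] {f : E × 𝕜 → ι → 𝕜} {z : E}
    {s : 𝕜} (hf : DifferentiableAt 𝕜 (fderiv 𝕜 f) (z, s)) (w : E × 𝕜) (i : ι) :
    HasDerivAt (fun r => fderiv 𝕜 f (z, r) w i) (fderiv 𝕜 (fderiv 𝕜 f) (z, s) (0, 1) w i) s :=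
  (((ContinuousLinearMap.proj i : (ι → 𝕜) →L[𝕜] 𝕜) ∘L
    ContinuousLinearMap.apply 𝕜 _ w).hasFDerivAt.comp _ hf.hasFDerivAt).hasDerivAt_comp_prodMk_right

end

theorem deriv_det_eq_sum_fderiv_adjugate_mul {𝕜 n : Type*} [RCLike 𝕜] [Fintype n] [DecidableEq n]
    {F : (n → 𝕜) × 𝕜 → n → 𝕜} (hF : ContDiff 𝕜 2 F) {J : (n → 𝕜) → 𝕜 → Matrix n n 𝕜}
    (hJ : ∀ z s i α, J z s i α = fderiv 𝕜 F (z, s) (Pi.single α 1, 0) i)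
    {v : (n → 𝕜) → 𝕜 → n → 𝕜} (hv : ∀ z s i, v z s i = fderiv 𝕜 F (z, s) (0, 1) i)
    (x : n → 𝕜) (t : 𝕜) :
    deriv (fun s => (J x s).det) t =
      ∑ α, fderiv 𝕜 (fun z => ∑ i, (J z t).adjugate α i * v z t i) x (Pi.single α 1) := by
  have hF' : DifferentiableAt 𝕜 (fderiv 𝕜 F) (x, t) :=
    (hF.fderiv_right (m := 1) (by norm_num)).differentiable (by norm_num) _
  have hsymm : ∀ p q, fderiv 𝕜 (fderiv 𝕜 F) (x, t) p q = fderiv 𝕜 (fderiv 𝕜 F) (x, t) q p :=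
    hF.contDiffAt.isSymmSndFDerivAt (by simp)
  have hJx : ∀ i α, HasFDerivAt (fun z => J z t i α) _ x := fun i α => by
    simp_rw [hJ]
    exact hasFDerivAt_fderiv_apply_left hF' _ i
  have hvx : ∀ i, HasFDerivAt (fun z => v z t i) _ x := fun i => by
    simp_rw [hv]
    exact hasFDerivAt_fderiv_apply_left hF' _ i
  have hJt : ∀ i α, HasDerivAt (fun s => J x s i α) _ t := fun i α => by
    simp_rw [hJ]
    exact hasDerivAt_fderiv_apply_right hF' _ i
  have hcurl : ∀ i j k, fderiv 𝕜 (fun z => J z t i j) x (Pi.single k 1) =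
      fderiv 𝕜 (fun z => J z t i k) x (Pi.single j 1) := fun i j k => by
    simp [(hJx _ _).fderiv, hsymm (Pi.single k 1, 0)]
  rw [(hasDerivAt_det hJt).deriv, Finset.sum_comm, sum_fderiv_adjugate_mul_eq
    (fun i j => (hJx i j).differentiableAt) hcurl fun i => (hvx i).differentiableAt]
  simp [(hvx _).fderiv, hsymm (0, 1)]

/-- **Qin's conservation law for the determinant.**
Let `y : ℝ³ × ℝ → ℝ³` be `C²`, `J z t` its spatial Jacobian, `v z t = ∂ₜ y`,
and `cof M = (adjugate M)ᵀ`. Then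
`∂ₜ det(∇y) = div((cof ∇y)ᵀ ∂ₜ y)`, i.e.
`∂ₜ det(∇y)(x,t) = Σ_α ∂/∂x_α [ Σ_i (cof ∇y)_{iα} ∂ₜyᵢ ](x,t)`. -/
theorem det_conservation_law
    (y : (Fin 3 → ℝ) → ℝ → (Fin 3 → ℝ))
    (hy : ContDiff ℝ 2 (fun p : (Fin 3 → ℝ) × ℝ => y p.1 p.2))
    (J : (Fin 3 → ℝ) → ℝ → Matrix (Fin 3) (Fin 3) ℝ)
    (hJ : ∀ z t i α, J z t i α = fderiv ℝ (fun w => y w t) z (Pi.single α 1) i)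
    (v : (Fin 3 → ℝ) → ℝ → (Fin 3 → ℝ))
    (hv : ∀ z t i, v z t i = deriv (fun s => y z s i) t)
    (x : Fin 3 → ℝ) (t : ℝ) :
    deriv (fun s => (J x s).det) t
      = ∑ α, fderiv ℝ (fun z => ∑ i, ((J z t).adjugate)ᵀ i α * v z t i) x
          (Pi.single α 1) := by
  have hdiff : ∀ p, HasFDerivAt (fun p : (Fin 3 → ℝ) × ℝ => y p.1 p.2) _ p := fun p =>
    (hy.differentiable (by norm_num) p).hasFDerivAt
  refine deriv_det_eq_sum_fderiv_adjugate_mul hy (fun z s i α => ?_) (fun z s i => ?_) x t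
  · rw [hJ, (hdiff (z, s)).comp_prodMk_left.fderiv]
    rfl
  · rw [hv]
    exact (hasDerivAt_pi.1 (hdiff (z, s)).hasDerivAt_comp_prodMk_right i).deriv
end

section
/- Let p > 4 and q, r ∈ [2,∞), and let G : ℝ^{3×3} × ℝ^{3×3} × ℝ → ℝ be continuously differentiable with partial derivatives satisfying |∂_F G(F,Z,w)|^{p/(p−1)} + |∂_Z G(F,Z,w)|^{p/(p−2)} + |∂_w G(F,Z,w)|^{p/(p−3)} ≤ C(|F|^p + |Z|^q + |w|^r + 1) for all (F,Z,w) and some constant C > 0. Define ζ(F,Z,w) ∈ ℝ^{3×3} by ζ_{iα}(F,Z,w) = (∂_F G)_{iα} + Σ_{j,k,β,γ} ε_{ijk} ε_{αβγ} F_{jβ} (∂_Z G)_{kγ} + (cof F)_{iα} ∂_w G. Then there exists a constant C' > 0 such that |ζ(F,Z,w)|^{p/(p−1)} ≤ C'(|F|^p + |Z|^q + |w|^r + 1) for all (F,Z,w). -/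
open Matrix
open scoped BigOperators

attribute [local instance] Matrix.normedAddCommGroup Matrix.normedSpace

/-- The Levi–Civita symbol on `{1,2,3}` (zero-based indices). -/
noncomputable def eps (i j k : Fin 3) : ℝ :=
  (((j.val : ℝ) - (i.val : ℝ)) * ((k.val : ℝ) - (i.val : ℝ))
    * ((k.val : ℝ) - (j.val : ℝ))) / 2

/-- The Frobenius norm of a real `3 × 3` matrix. -/
noncomputable def frob (M : Matrix (Fin 3) (Fin 3) ℝ) : ℝ :=
  Real.sqrt (∑ i, ∑ j, M i j ^ 2)

/-!
Entrywise, `|ε| ≤ 1` and the quadratic growth of the cofactor bound `|ζ|` by a constant times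
`|∂_F G| + |F| |∂_Z G| + |F|² |∂_w G|`. After raising to `s = p/(p-1)`, the first term is controlled
by the hypothesis directly, and each product `|F|^k |Y|` (`k = 1, 2`) by Young's inequality with
the conjugate exponents `(p-1)/k` and `(p-1)/(p-1-k)`, which turns `(|F|^k |Y|)^s` into
`|F|^p + |Y|^(p/(p-1-k))`.
-/

open Real Finset

lemma frob_nonneg (M : Matrix (Fin 3) (Fin 3) ℝ) : 0 ≤ frob M :=
  sqrt_nonneg _

lemma abs_apply_le_frob (M : Matrix (Fin 3) (Fin 3) ℝ) (i j : Fin 3) : |M i j| ≤ frob M := by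
  rw [frob, ← sqrt_sq_eq_abs]
  gcongr
  calc M i j ^ 2 ≤ ∑ j', M i j' ^ 2 :=
        single_le_sum (f := fun j' => M i j' ^ 2) (fun _ _ => sq_nonneg _) (mem_univ j)
    _ ≤ ∑ i', ∑ j', M i' j' ^ 2 :=
        single_le_sum (f := fun i' => ∑ j', M i' j' ^ 2)
          (fun _ _ => sum_nonneg fun _ _ => sq_nonneg _) (mem_univ i)

lemma frob_le_of_abs_apply_le {M : Matrix (Fin 3) (Fin 3) ℝ} {B : ℝ} (h : ∀ i j, |M i j| ≤ B) :
    frob M ≤ 3 * B := by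
  have hB : 0 ≤ B := (abs_nonneg _).trans (h 0 0)
  rw [frob, ← sqrt_sq (by positivity : 0 ≤ 3 * B)]
  gcongr
  calc ∑ i, ∑ j, M i j ^ 2 ≤ ∑ _i : Fin 3, ∑ _j : Fin 3, B ^ 2 :=
        sum_le_sum fun i _ => sum_le_sum fun j _ =>
          sq_le_sq' (abs_le.1 (h i j)).1 (abs_le.1 (h i j)).2
    _ = (3 * B) ^ 2 := by simp; ring

lemma abs_sum_le_card_mul {ι : Type*} [Fintype ι] {f : ι → ℝ} {B : ℝ} (h : ∀ i, |f i| ≤ B) :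
    |∑ i, f i| ≤ Fintype.card ι * B := by
  simpa using (abs_sum_le_sum_abs f univ).trans (sum_le_card_nsmul univ _ B fun i _ => h i)

lemma abs_eps_le_one (i j k : Fin 3) : |eps i j k| ≤ 1 := by
  fin_cases i <;> fin_cases j <;> fin_cases k <;> norm_num [eps]

lemma abs_adjugate_apply_le (F : Matrix (Fin 3) (Fin 3) ℝ) (i j : Fin 3) :
    |F.adjugate i j| ≤ 2 * frob F ^ 2 := by
  have h := abs_apply_le_frob F
  have minor_le : ∀ {a b c d : ℝ}, |a| ≤ frob F → |b| ≤ frob F → |c| ≤ frob F → |d| ≤ frob F →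
      |a * b - c * d| ≤ 2 * frob F ^ 2 := by
    intro a b c d ha hb hc hd
    have hab : |a * b| ≤ frob F ^ 2 := by rw [abs_mul, sq]; gcongr; exact (abs_nonneg _).trans ha
    have hcd : |c * d| ≤ frob F ^ 2 := by rw [abs_mul, sq]; gcongr; exact (abs_nonneg _).trans hc
    linarith [abs_sub (a * b) (c * d)]
  rw [Matrix.adjugate_fin_three]
  fin_cases i <;> fin_cases j <;>
    simp only [Matrix.of_apply, Matrix.cons_val', Matrix.empty_val',
      Matrix.cons_val_fin_one, neg_add_eq_sub] <;>
    exact minor_le (h _ _) (h _ _) (h _ _) (h _ _)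

lemma abs_sum_eps_eps_mul_le (F Y : Matrix (Fin 3) (Fin 3) ℝ) (i α : Fin 3) :
    |∑ j, ∑ k, ∑ β, ∑ γ, eps i j k * eps α β γ * F j β * Y k γ| ≤ 81 * (frob F * frob Y) := by
  have term_le : ∀ j k β γ, |eps i j k * eps α β γ * F j β * Y k γ| ≤ frob F * frob Y := by
    intro j k β γ
    rw [abs_mul, abs_mul, abs_mul]
    have := abs_eps_le_one i j k
    have := abs_eps_le_one α β γ
    have := abs_apply_le_frob F j β
    have := abs_apply_le_frob Y k γ
    have := frob_nonneg F
    calc |eps i j k| * |eps α β γ| * |F j β| * |Y k γ| ≤ 1 * 1 * frob F * frob Y := by gcongr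
      _ = frob F * frob Y := by ring
  calc _ ≤ 3 * (3 * (3 * (3 * (frob F * frob Y)))) := by
        simpa using abs_sum_le_card_mul fun j => abs_sum_le_card_mul fun k =>
          abs_sum_le_card_mul fun β => abs_sum_le_card_mul fun γ => term_le j k β γ
    _ = 81 * (frob F * frob Y) := by ring

lemma abs_stress_apply_le (P Y F : Matrix (Fin 3) (Fin 3) ℝ) (d : ℝ) (i α : Fin 3) :
    |P i α + (∑ j, ∑ k, ∑ β, ∑ γ, eps i j k * eps α β γ * F j β * Y k γ)
        + (F.adjugate)ᵀ i α * d|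
      ≤ 81 * (frob P + frob F * frob Y + frob F ^ 2 * |d|) := by
  have hP := abs_apply_le_frob P i α
  have hcontr := abs_sum_eps_eps_mul_le F Y i α
  have hcof : |(F.adjugate)ᵀ i α * d| ≤ 2 * frob F ^ 2 * |d| := by
    rw [abs_mul]; gcongr; exact abs_adjugate_apply_le F α i
  have := frob_nonneg P
  have := mul_nonneg (sq_nonneg (frob F)) (abs_nonneg d)
  linarith [abs_add_three (P i α) (∑ j, ∑ k, ∑ β, ∑ γ, eps i j k * eps α β γ * F j β * Y k γ)
    ((F.adjugate)ᵀ i α * d)]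

lemma rpow_mul_le_rpow_add_rpow {x y k m p : ℝ} (hx : 0 ≤ x) (hy : 0 ≤ y) (hk : 0 < k)
    (hm : 0 < m) (hp : k + m + 1 = p) :
    (x ^ k * y) ^ (p / (p - 1)) ≤ x ^ p + y ^ (p / m) := by
  have hp1 : p - 1 = k + m := by linarith
  have hconj : ((k + m) / k).HolderConjugate ((k + m) / m) :=
    holderConjugate_iff.2 ⟨by rw [lt_div_iff₀ hk]; linarith, by field_simp⟩
  rw [hp1, mul_rpow (rpow_nonneg hx k) hy, ← rpow_mul hx]
  calc x ^ (k * (p / (k + m))) * y ^ (p / (k + m))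
      ≤ (x ^ (k * (p / (k + m)))) ^ ((k + m) / k) / ((k + m) / k)
        + (y ^ (p / (k + m))) ^ ((k + m) / m) / ((k + m) / m) :=
        young_inequality_of_nonneg (rpow_nonneg hx _) (rpow_nonneg hy _) hconj
    _ ≤ (x ^ (k * (p / (k + m)))) ^ ((k + m) / k) + (y ^ (p / (k + m))) ^ ((k + m) / m) := by
        gcongr
        · exact div_le_self (by positivity) hconj.lt.le
        · exact div_le_self (by positivity) hconj.symm.lt.le
    _ = x ^ p + y ^ (p / m) := by
        rw [← rpow_mul hx, ← rpow_mul hy]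
        congr 2 <;> field_simp

lemma add_add_rpow_le {x y z s : ℝ} (hx : 0 ≤ x) (hy : 0 ≤ y) (hz : 0 ≤ z) (hs : 1 ≤ s) :
    (x + y + z) ^ s ≤ 3 ^ (s - 1) * (x ^ s + y ^ s + z ^ s) := by
  have hnonneg : ∀ i ∈ (univ : Finset (Fin 3)), 0 ≤ ![x, y, z] i := by
    intro i _; fin_cases i <;> assumption
  simpa [Fin.sum_univ_three, add_assoc] using
    rpow_sum_le_const_mul_sum_rpow_of_nonneg (s := univ) hs hnonneg

theorem zeta_growth_estimate_general (p q r C : ℝ)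
    (hp : 4 < p) (hC : 0 < C)
    (GF GZ : Matrix (Fin 3) (Fin 3) ℝ → Matrix (Fin 3) (Fin 3) ℝ → ℝ →
      Matrix (Fin 3) (Fin 3) ℝ)
    (Gw : Matrix (Fin 3) (Fin 3) ℝ → Matrix (Fin 3) (Fin 3) ℝ → ℝ → ℝ)
    (hgrow : ∀ F Z w,
      frob (GF F Z w) ^ (p / (p - 1)) + frob (GZ F Z w) ^ (p / (p - 2))
          + |Gw F Z w| ^ (p / (p - 3))
        ≤ C * (frob F ^ p + frob Z ^ q + |w| ^ r + 1))
    (ζ : Matrix (Fin 3) (Fin 3) ℝ → Matrix (Fin 3) (Fin 3) ℝ → ℝ →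
      Matrix (Fin 3) (Fin 3) ℝ)
    (hζ : ∀ F Z w i α, ζ F Z w i α
      = GF F Z w i α
        + (∑ j, ∑ k, ∑ β, ∑ γ, eps i j k * eps α β γ * F j β * GZ F Z w k γ)
        + (F.adjugate)ᵀ i α * Gw F Z w) :
    ∃ C' > 0, ∀ F Z w,
      frob (ζ F Z w) ^ (p / (p - 1))
        ≤ C' * (frob F ^ p + frob Z ^ q + |w| ^ r + 1) := by
  have hs1 : 1 ≤ p / (p - 1) := by rw [le_div_iff₀ (by linarith)]; linarith
  set s := p / (p - 1)
  refine ⟨243 ^ s * 3 ^ (s - 1) * (C + 2), by positivity, fun F Z w => ?_⟩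
  set M := frob F ^ p + frob Z ^ q + |w| ^ r + 1
  set A := frob F
  set a := frob (GF F Z w)
  set b := frob (GZ F Z w)
  set g := |Gw F Z w|
  have hA : 0 ≤ A := frob_nonneg F
  have ha : 0 ≤ a := frob_nonneg _
  have hAb : 0 ≤ A ^ (1 : ℝ) * b := mul_nonneg (rpow_nonneg hA _) (frob_nonneg _)
  have hAg : 0 ≤ A ^ (2 : ℝ) * g := mul_nonneg (rpow_nonneg hA _) (abs_nonneg _)
  have hAM : A ^ p ≤ M := by
    linarith [rpow_nonneg (frob_nonneg Z) q, rpow_nonneg (abs_nonneg w) r]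
  have hζ_le : frob (ζ F Z w) ≤ 243 * (a + A ^ (1 : ℝ) * b + A ^ (2 : ℝ) * g) := by
    have := frob_le_of_abs_apply_le fun i α => (hζ F Z w i α).symm ▸
      abs_stress_apply_le (GF F Z w) (GZ F Z w) F (Gw F Z w) i α
    rw [rpow_one, rpow_two]; linarith
  have young_b := rpow_mul_le_rpow_add_rpow hA (frob_nonneg (GZ F Z w)) one_pos
    (m := p - 2) (by linarith) (by ring)
  have young_g := rpow_mul_le_rpow_add_rpow hA (abs_nonneg (Gw F Z w)) two_pos
    (m := p - 3) (by linarith) (by ring)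
  have := hgrow F Z w
  calc frob (ζ F Z w) ^ s ≤ (243 * (a + A ^ (1 : ℝ) * b + A ^ (2 : ℝ) * g)) ^ s :=
        rpow_le_rpow (frob_nonneg _) hζ_le (by linarith)
    _ = 243 ^ s * (a + A ^ (1 : ℝ) * b + A ^ (2 : ℝ) * g) ^ s :=
        mul_rpow (by norm_num) (by linarith)
    _ ≤ 243 ^ s * (3 ^ (s - 1) * (a ^ s + (A ^ (1 : ℝ) * b) ^ s + (A ^ (2 : ℝ) * g) ^ s)) := by
        gcongr; exact add_add_rpow_le ha hAb hAg hs1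
    _ ≤ 243 ^ s * (3 ^ (s - 1) * ((C + 2) * M)) := by gcongr; linarith
    _ = 243 ^ s * 3 ^ (s - 1) * (C + 2) * M := by ring

/-- **Growth estimate for the enlarged polyconvex stress `ζ`.**
If `G : ℝ^{3×3} × ℝ^{3×3} × ℝ → ℝ` is `C¹` with partial derivatives satisfying
`|∂_F G|^{p/(p−1)} + |∂_Z G|^{p/(p−2)} + |∂_w G|^{p/(p−3)}
  ≤ C(|F|^p + |Z|^q + |w|^r + 1)`, then the stress
`ζ_{iα} = (∂_F G)_{iα} + Σ ε_{ijk} ε_{αβγ} F_{jβ} (∂_Z G)_{kγ} + (cof F)_{iα} ∂_w G`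
satisfies `|ζ|^{p/(p−1)} ≤ C'(|F|^p + |Z|^q + |w|^r + 1)` for some `C' > 0`. -/
theorem zeta_growth_estimate (p q r C : ℝ)
    (hp : 4 < p) (hq : 2 ≤ q) (hr : 2 ≤ r) (hC : 0 < C)
    (G : Matrix (Fin 3) (Fin 3) ℝ → Matrix (Fin 3) (Fin 3) ℝ → ℝ → ℝ)
    (hG : ContDiff ℝ 1 (fun x : Matrix (Fin 3) (Fin 3) ℝ ×
        Matrix (Fin 3) (Fin 3) ℝ × ℝ => G x.1 x.2.1 x.2.2))
    (GF GZ : Matrix (Fin 3) (Fin 3) ℝ → Matrix (Fin 3) (Fin 3) ℝ → ℝ →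
      Matrix (Fin 3) (Fin 3) ℝ)
    (Gw : Matrix (Fin 3) (Fin 3) ℝ → Matrix (Fin 3) (Fin 3) ℝ → ℝ → ℝ)
    (hGF : ∀ F Z w i α, GF F Z w i α
      = fderiv ℝ (fun F' => G F' Z w) F (Matrix.single i α 1))
    (hGZ : ∀ F Z w k γ, GZ F Z w k γ
      = fderiv ℝ (fun Z' => G F Z' w) Z (Matrix.single k γ 1))
    (hGw : ∀ F Z w, Gw F Z w = deriv (fun w' => G F Z w') w)
    (hgrow : ∀ F Z w,
      frob (GF F Z w) ^ (p / (p - 1)) + frob (GZ F Z w) ^ (p / (p - 2))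
          + |Gw F Z w| ^ (p / (p - 3))
        ≤ C * (frob F ^ p + frob Z ^ q + |w| ^ r + 1))
    (ζ : Matrix (Fin 3) (Fin 3) ℝ → Matrix (Fin 3) (Fin 3) ℝ → ℝ →
      Matrix (Fin 3) (Fin 3) ℝ)
    (hζ : ∀ F Z w i α, ζ F Z w i α
      = GF F Z w i α
        + (∑ j, ∑ k, ∑ β, ∑ γ, eps i j k * eps α β γ * F j β * GZ F Z w k γ)
        + (F.adjugate)ᵀ i α * Gw F Z w) :
    ∃ C' > 0, ∀ F Z w,
      frob (ζ F Z w) ^ (p / (p - 1))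
        ≤ C' * (frob F ^ p + frob Z ^ q + |w| ^ r + 1) :=
  zeta_growth_estimate_general p q r C hp hC GF GZ Gw hgrow ζ hζ
end
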